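/- Let h > 0, Δx > 0, let α, β ∈ ℝ with β ≥ 0, and let ν̃ : ℝ → [0,∞) be such that S := Σ_{l∈ℤ} ν̃(lΔx)Δx < ∞. Define linear operators A and B on l_∞(ℤ) by (Av)_i = −(β + |α|·1_{α<0}) v_{i−1} + (1 + 2β + |α|) v_i − (β + |α|·1_{α>0}) v_{i+1} and (Bv)_i = v_i + hΔx Σ_{l∈ℤ} ν̃(lΔx)(v_{i+l} − v_i). Then A is a bounded bijection of l_∞(ℤ) whose inverse satisfies |A^{−1}|_∞ ≤ 1, and |B|_∞ ≤ 1 + 2Sh. If moreover hΔx Σ_{l∈ℤ, l≠0} ν̃(lΔx) ≤ 1, then Π = A^{−1}B is a stochastic operator: its matrix entries Π_{ij} (defined by Π_{ij} = (Π e_j)_i for the coordinate sequences e_j) satisfy Π_{ij} ≥ 0 for all i, j ∈ ℤ and Σ_{j∈ℤ} Π_{ij} = 1 for every i ∈ ℤ. -/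

import Mathlib

/-!
Write `c = 1 + a + b` with `a = β + |α| 1_{α<0}` and `b = β + |α| 1_{α>0}`, so that
`c = 1 + 2β + |α|`. Then `A = c (1 - K)`, where `K v i = (a / c) v (i-1) + (b / c) v (i+1)` is a
nonnegative nearest-neighbour average of norm at most `(a + b) / c = 1 - c⁻¹ < 1`. Hence
`A⁻¹ = c⁻¹ ∑ Kⁿ` is a Neumann series of norm at most `c⁻¹ (1 - (1 - c⁻¹))⁻¹ = 1`. Likewise
`B = 1 + hΔx ∑ₗ ν̃(lΔx) (τₗ - 1)`, with `τₗ` the shift by `l`, converges in operator norm.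

For stochasticity, the columns `B eⱼ` form a nonnegative matrix with unit row sums: its diagonal
entry is `1 - hΔx ∑_{l≠0} ν̃(lΔx)`. Each `Kⁿ` preserves nonnegativity and multiplies row sums by
`(1 - c⁻¹)ⁿ`. Since the double series over `n` and `j` is nonnegative, it may be summed in either
order, which gives the row sums `c⁻¹ ∑ (1 - c⁻¹)ⁿ = 1` for `A⁻¹ B`.
-/

open scoped ENNReal lp

noncomputable section

theorem ContinuousLinearMap.norm_one_le {𝕜 E : Type*} [NontriviallyNormedField 𝕜]
    [SeminormedAddCommGroup E] [NormedSpace 𝕜 E] : ‖(1 : E →L[𝕜] E)‖ ≤ 1 :=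
  norm_id_le

theorem hasSum_tsum_swap_of_nonneg {β γ : Type*} {f : β → γ → ℝ} (hf : ∀ b c, 0 ≤ f b c)
    {g : β → ℝ} (hg : ∀ b, HasSum (f b) (g b)) {a : ℝ} (ha : HasSum g a) :
    HasSum (fun c => ∑' b, f b c) a := by
  have hF : Summable (Function.uncurry f) :=
    (summable_prod_of_nonneg fun x => hf x.1 x.2).2
      ⟨fun b => (hg b).summable, by simpa only [(hg _).tsum_eq] using ha.summable⟩
  have hswap : ∑' c, ∑' b, f b c = a := by
    rw [hF.tsum_comm, ← ha.tsum_eq]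
    exact tsum_congr fun b => (hg b).tsum_eq
  exact hswap ▸ hF.prod_symm.prod.hasSum

namespace lp

variable (𝕜 : Type*) {ι κ E : Type*} [NontriviallyNormedField 𝕜] [NormedAddCommGroup E]
  [NormedSpace 𝕜 E]

def precompInfty (σ : ι → κ) : ℓ^∞(κ, E) →L[𝕜] ℓ^∞(ι, E) :=
  LinearMap.mkContinuous
    { toFun := fun v => ⟨fun i => v (σ i), memℓp_infty ⟨‖v‖, by
        rintro _ ⟨i, rfl⟩; exact norm_apply_le_norm ENNReal.top_ne_zero v (σ i)⟩⟩
      map_add' := fun _ _ => rfl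
      map_smul' := fun _ _ => rfl }
    1 fun v => by
      rw [one_mul]
      exact norm_le_of_forall_le (norm_nonneg v) fun i =>
        norm_apply_le_norm ENNReal.top_ne_zero v (σ i)

variable {𝕜}

@[simp]
theorem precompInfty_apply (σ : ι → κ) (v : ℓ^∞(κ, E)) (i : ι) :
    precompInfty 𝕜 σ v i = v (σ i) := rfl

theorem norm_precompInfty_le (σ : ι → κ) :
    ‖(precompInfty 𝕜 σ : ℓ^∞(κ, E) →L[𝕜] ℓ^∞(ι, E))‖ ≤ 1 :=
  LinearMap.mkContinuous_norm_le _ zero_le_one _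

theorem _root_.HasSum.lp_apply {p : ℝ≥0∞} [Fact (1 ≤ p)] {β F : Type*} [NormedAddCommGroup F]
    [NormedSpace 𝕜 F] {T : β → F →L[𝕜] ℓ^p(ι, E)} {S : F →L[𝕜] ℓ^p(ι, E)} (h : HasSum T S)
    (v : F) (i : ι) : HasSum (fun n => T n v i) (S v i) :=
  (h.mapL (ContinuousLinearMap.apply 𝕜 _ v)).mapL (evalCLM 𝕜 (fun _ : ι => E) p i)

end lp

namespace HybridScheme

section RowSums

variable {ι : Type*}

/-- `u j` is the `j`-th column of the matrix. -/
def HasNonnegRowSums (u : ι → ℓ^∞(ι, ℝ)) (m : ℝ) : Prop :=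
  ∀ i, (∀ j, 0 ≤ u j i) ∧ HasSum (fun j => u j i) m

theorem HasNonnegRowSums.const_smul {u : ι → ℓ^∞(ι, ℝ)} {m c : ℝ} (hu : HasNonnegRowSums u m)
    (hc : 0 ≤ c) : HasNonnegRowSums (fun j => c • u j) (c * m) := fun i =>
  ⟨fun j => by simpa using mul_nonneg hc ((hu i).1 j), by simpa using (hu i).2.mul_left c⟩

theorem HasNonnegRowSums.of_hasSum {u : ι → ℓ^∞(ι, ℝ)} {T : ℕ → ℓ^∞(ι, ℝ) →L[ℝ] ℓ^∞(ι, ℝ)}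
    {S : ℓ^∞(ι, ℝ) →L[ℝ] ℓ^∞(ι, ℝ)} (hT : HasSum T S) {r : ℕ → ℝ} {s : ℝ} (hr : HasSum r s)
    (hu : ∀ n, HasNonnegRowSums (fun j => T n (u j)) (r n)) :
    HasNonnegRowSums (fun j => S (u j)) s := by
  intro i
  have hentry : ∀ j, HasSum (fun n => T n (u j) i) (S (u j) i) := fun j => hT.lp_apply _ i
  refine ⟨fun j => (hentry j).nonneg fun n => (hu n i).1 j, ?_⟩
  simpa only [(hentry _).tsum_eq] using
    hasSum_tsum_swap_of_nonneg (fun n j => (hu n i).1 j) (fun n => (hu n i).2) hr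

end RowSums

abbrev shift (l : ℤ) : ℓ^∞(ℤ, ℝ) →L[ℝ] ℓ^∞(ℤ, ℝ) := lp.precompInfty ℝ (· + l)

def neighbourOp (p q : ℝ) : ℓ^∞(ℤ, ℝ) →L[ℝ] ℓ^∞(ℤ, ℝ) := p • shift (-1) + q • shift 1

theorem neighbourOp_apply (p q : ℝ) (v : ℓ^∞(ℤ, ℝ)) (i : ℤ) :
    neighbourOp p q v i = p * v (i - 1) + q * v (i + 1) :=
  rfl

theorem norm_neighbourOp_le {p q : ℝ} (hp : 0 ≤ p) (hq : 0 ≤ q) : ‖neighbourOp p q‖ ≤ p + q :=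
  calc ‖neighbourOp p q‖ ≤ ‖p • shift (-1)‖ + ‖q • shift 1‖ := norm_add_le _ _
    _ = p * ‖shift (-1)‖ + q * ‖shift 1‖ := by
        rw [norm_smul, norm_smul, Real.norm_of_nonneg hp, Real.norm_of_nonneg hq]
    _ ≤ p * 1 + q * 1 := by gcongr <;> exact lp.norm_precompInfty_le _
    _ = p + q := by ring

theorem HasNonnegRowSums.neighbourOp_pow {u : ℤ → ℓ^∞(ℤ, ℝ)} {m p q : ℝ} (hu : HasNonnegRowSums u m)
    (hp : 0 ≤ p) (hq : 0 ≤ q) (n : ℕ) :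
    HasNonnegRowSums (fun j => (neighbourOp p q ^ n) (u j)) ((p + q) ^ n * m) := by
  induction n with
  | zero => simpa using hu
  | succ n ih =>
    have hstep : ∀ j k, (neighbourOp p q ^ (n + 1)) (u j) k =
        p * (neighbourOp p q ^ n) (u j) (k - 1) + q * (neighbourOp p q ^ n) (u j) (k + 1) :=
      fun j k => by rw [pow_succ', mul_apply_eq_comp, neighbourOp_apply]
    intro i
    simp only [hstep]
    refine ⟨fun j => ?_, ?_⟩
    · have := (ih (i - 1)).1 j
      have := (ih (i + 1)).1 j
      positivity
    · rw [show (p + q) ^ (n + 1) * m = p * ((p + q) ^ n * m) + q * ((p + q) ^ n * m) by ring]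
      exact ((ih (i - 1)).2.mul_left p).add ((ih (i + 1)).2.mul_left q)

section Tridiagonal

variable {a b : ℝ}

abbrev tridiagOffDiag (a b : ℝ) : ℓ^∞(ℤ, ℝ) →L[ℝ] ℓ^∞(ℤ, ℝ) :=
  neighbourOp (a / (1 + a + b)) (b / (1 + a + b))

def tridiag (a b : ℝ) : ℓ^∞(ℤ, ℝ) →L[ℝ] ℓ^∞(ℤ, ℝ) := (1 + a + b) • (1 - tridiagOffDiag a b)

def tridiagInv (a b : ℝ) : ℓ^∞(ℤ, ℝ) →L[ℝ] ℓ^∞(ℤ, ℝ) :=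
  (1 + a + b)⁻¹ • ∑' n : ℕ, tridiagOffDiag a b ^ n

theorem tridiag_apply (ha : 0 ≤ a) (hb : 0 ≤ b) (v : ℓ^∞(ℤ, ℝ)) (i : ℤ) :
    tridiag a b v i = -a * v (i - 1) + (1 + a + b) * v i - b * v (i + 1) := by
  have hc : 1 + a + b ≠ 0 := by positivity
  simp only [tridiag, smul_apply, sub_apply, one_apply_eq_self, neighbourOp_apply, lp.coeFn_smul,
    lp.coeFn_sub, Pi.smul_apply, Pi.sub_apply, smul_eq_mul]
  field_simp
  ring

theorem tridiagOffDiag_weights_add (ha : 0 ≤ a) (hb : 0 ≤ b) :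
    a / (1 + a + b) + b / (1 + a + b) = 1 - (1 + a + b)⁻¹ := by
  field_simp
  ring

theorem norm_tridiagOffDiag_le (ha : 0 ≤ a) (hb : 0 ≤ b) :
    ‖tridiagOffDiag a b‖ ≤ 1 - (1 + a + b)⁻¹ :=
  tridiagOffDiag_weights_add ha hb ▸ norm_neighbourOp_le (by positivity) (by positivity)

theorem norm_tridiagOffDiag_lt_one (ha : 0 ≤ a) (hb : 0 ≤ b) : ‖tridiagOffDiag a b‖ < 1 :=
  (norm_tridiagOffDiag_le ha hb).trans_lt (sub_lt_self 1 (by positivity))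

theorem tridiagInv_tridiag (ha : 0 ≤ a) (hb : 0 ≤ b) (v : ℓ^∞(ℤ, ℝ)) :
    tridiagInv a b (tridiag a b v) = v := by
  rw [tridiagInv, tridiag, smul_apply, smul_apply, map_smul, smul_smul,
    inv_mul_cancel₀ (by positivity), one_smul, ← mul_apply_eq_comp,
    geom_series_mul_neg _ (norm_tridiagOffDiag_lt_one ha hb), one_apply_eq_self]

theorem tridiag_tridiagInv (ha : 0 ≤ a) (hb : 0 ≤ b) (v : ℓ^∞(ℤ, ℝ)) :
    tridiag a b (tridiagInv a b v) = v := by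
  rw [tridiagInv, tridiag, smul_apply, smul_apply, map_smul, smul_smul,
    mul_inv_cancel₀ (by positivity), one_smul, ← mul_apply_eq_comp,
    mul_neg_geom_series _ (norm_tridiagOffDiag_lt_one ha hb), one_apply_eq_self]

theorem norm_tridiagInv_le_one (ha : 0 ≤ a) (hb : 0 ≤ b) : ‖tridiagInv a b‖ ≤ 1 := by
  have hK := norm_tridiagOffDiag_le ha hb
  have hc : 0 < 1 + a + b := by positivity
  calc ‖tridiagInv a b‖ = (1 + a + b)⁻¹ * ‖∑' n : ℕ, tridiagOffDiag a b ^ n‖ := by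
        rw [tridiagInv, norm_smul, Real.norm_of_nonneg (by positivity)]
    _ ≤ (1 + a + b)⁻¹ * (1 - ‖tridiagOffDiag a b‖)⁻¹ := by
        gcongr
        linarith [tsum_geometric_le_of_norm_lt_one _ (norm_tridiagOffDiag_lt_one ha hb),
          ContinuousLinearMap.norm_one_le (𝕜 := ℝ) (E := ℓ^∞(ℤ, ℝ))]
    _ ≤ (1 + a + b)⁻¹ * (1 - (1 - (1 + a + b)⁻¹))⁻¹ := by
        gcongr
        rw [sub_sub_cancel]
        positivity
    _ = 1 := by rw [sub_sub_cancel, inv_inv, inv_mul_cancel₀ hc.ne']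

theorem HasNonnegRowSums.tridiagInv (ha : 0 ≤ a) (hb : 0 ≤ b) {u : ℤ → ℓ^∞(ℤ, ℝ)} {m : ℝ}
    (hu : HasNonnegRowSums u m) : HasNonnegRowSums (fun j => tridiagInv a b (u j)) m := by
  have hc : 0 < 1 + a + b := by positivity
  have hr : 0 ≤ a / (1 + a + b) + b / (1 + a + b) := by positivity
  have hr1 : a / (1 + a + b) + b / (1 + a + b) < 1 := by
    rw [tridiagOffDiag_weights_add ha hb]
    exact sub_lt_self 1 (by positivity)
  have hseries := HasNonnegRowSums.of_hasSum
    (summable_geometric_of_norm_lt_one (norm_tridiagOffDiag_lt_one ha hb)).hasSum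
    ((hasSum_geometric_of_lt_one hr hr1).mul_right m)
    fun n => hu.neighbourOp_pow (by positivity) (by positivity) n
  have hm : (1 + a + b)⁻¹ * ((1 - (a / (1 + a + b) + b / (1 + a + b)))⁻¹ * m) = m := by
    rw [tridiagOffDiag_weights_add ha hb, sub_sub_cancel, inv_inv, ← mul_assoc,
      inv_mul_cancel₀ hc.ne', one_mul]
  exact hm ▸ hseries.const_smul (inv_nonneg.2 hc.le)

end Tridiagonal

section Jump

variable {κ : ℝ} {w : ℤ → ℝ}

abbrev unitVec (j : ℤ) : ℓ^∞(ℤ, ℝ) := lp.single ∞ j 1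

def jumpOp (κ : ℝ) (w : ℤ → ℝ) : ℓ^∞(ℤ, ℝ) →L[ℝ] ℓ^∞(ℤ, ℝ) :=
  1 + κ • ∑' l, w l • (shift l - 1)

theorem norm_smul_shift_sub_one_le (c : ℝ) (l : ℤ) : ‖c • (shift l - 1)‖ ≤ 2 * |c| :=
  calc ‖c • (shift l - 1)‖ ≤ |c| * (‖shift l‖ + ‖(1 : ℓ^∞(ℤ, ℝ) →L[ℝ] ℓ^∞(ℤ, ℝ))‖) := by
        rw [norm_smul, Real.norm_eq_abs]
        gcongr
        exact norm_sub_le _ _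
    _ ≤ |c| * (1 + 1) := by
        gcongr
        exacts [lp.norm_precompInfty_le _, ContinuousLinearMap.norm_one_le]
    _ = 2 * |c| := by ring

theorem hasSum_jumpOp_series (hw : Summable w) :
    HasSum (fun l => w l • (shift l - 1)) (∑' l, w l • (shift l - 1)) :=
  (Summable.of_norm_bounded (hw.abs.mul_left 2) fun l =>
    norm_smul_shift_sub_one_le (w l) l).hasSum

theorem jumpOp_apply (hw : Summable w) (v : ℓ^∞(ℤ, ℝ)) (i : ℤ) :
    jumpOp κ w v i = v i + κ * ∑' l, w l * (v (i + l) - v i) :=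
  calc jumpOp κ w v i = v i + κ * (∑' l, w l • (shift l - 1)) v i := rfl
    _ = v i + κ * ∑' l, w l * (v (i + l) - v i) := by
        rw [← ((hasSum_jumpOp_series hw).lp_apply v i).tsum_eq]
        rfl

theorem norm_jumpOp_le (hκ : 0 ≤ κ) (hw₀ : ∀ l, 0 ≤ w l) (hw : Summable w) :
    ‖jumpOp κ w‖ ≤ 1 + 2 * κ * ∑' l, w l := by
  have hseries : ‖∑' l, w l • (shift l - 1)‖ ≤ ∑' l, 2 * w l :=
    tsum_of_norm_bounded (hw.mul_left 2).hasSum fun l => by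
      simpa only [abs_of_nonneg (hw₀ l)] using norm_smul_shift_sub_one_le (w l) l
  calc ‖jumpOp κ w‖ ≤ 1 + κ * ∑' l, 2 * w l := by
        refine (norm_add_le _ _).trans (add_le_add ContinuousLinearMap.norm_one_le ?_)
        rw [norm_smul, Real.norm_of_nonneg hκ]
        gcongr
    _ = 1 + 2 * κ * ∑' l, w l := by
        rw [tsum_mul_left]
        ring

theorem jumpOp_unitVec_apply (hw : Summable w) (j l : ℤ) :
    jumpOp κ w (unitVec j) l = (if l = j then 1 - κ * ∑' m, w m else 0) + κ * w (j - l) := by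
  have hterm : HasSum (fun m => w m * (unitVec j (l + m) - unitVec j l))
      (w (j - l) - (∑' m, w m) * unitVec j l) := by
    simp only [mul_sub]
    refine HasSum.sub ?_ (hw.hasSum.mul_right _)
    convert hasSum_single (j - l) fun m hm => ?_ using 1
    · simp
    · simp [lp.single_apply, show l + m ≠ j by omega]
  rw [jumpOp_apply hw, hterm.tsum_eq]
  by_cases hlj : l = j
  · subst hlj
    simp
    ring
  · simp [lp.single_apply, hlj]

theorem hasNonnegRowSums_jumpOp_unitVec (hκ : 0 ≤ κ) (hw₀ : ∀ l, 0 ≤ w l) (hw : Summable w)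
    (hκw : κ * ∑' l : {l : ℤ // l ≠ 0}, w l ≤ 1) :
    HasNonnegRowSums (fun j => jumpOp κ w (unitVec j)) 1 := by
  have hsplit : ∑' l, w l = w 0 + ∑' l : {l : ℤ // l ≠ 0}, w l := by
    rw [← hw.tsum_subtype_add_tsum_subtype_compl {0}, tsum_singleton]
    rfl
  intro l
  simp only [jumpOp_unitVec_apply hw]
  refine ⟨fun j => ?_, ?_⟩
  · have := mul_nonneg hκ (hw₀ (j - l))
    split_ifs with hlj
    · subst hlj
      rw [sub_self, hsplit]
      nlinarith [mul_nonneg hκ (hw₀ 0)]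
    · linarith
  · have hshift : HasSum (fun j => w (j - l)) (∑' m, w m) :=
      (Equiv.subRight l).hasSum_iff.2 hw.hasSum
    simpa only [sub_add_cancel] using
      (hasSum_ite_eq' l (1 - κ * ∑' m, w m)).add (hshift.mul_left κ)

end Jump

theorem abs_mul_ite_neg_add_abs_mul_ite_pos (α : ℝ) :
    |α| * (if α < 0 then 1 else 0) + |α| * (if 0 < α then 1 else 0) = |α| := by
  rcases lt_trichotomy α 0 with h | rfl | h
  · simp [h, h.not_gt]
  · simp
  · simp [h, h.not_gt]

end HybridScheme

open HybridScheme

theorem stmt_19 (h Δx α β : ℝ) (hh : 0 < h) (hΔx : 0 < Δx) (hβ : 0 ≤ β)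
    (ν : ℝ → ℝ) (hν : ∀ x, 0 ≤ ν x)
    (hsum : Summable fun l : ℤ => ν ((l : ℝ) * Δx)) :
    ∃ A Ainv B : lp (fun _ : ℤ => ℝ) ∞ →L[ℝ] lp (fun _ : ℤ => ℝ) ∞,
      (∀ (v : lp (fun _ : ℤ => ℝ) ∞) (i : ℤ),
        A v i = -(β + |α| * (if α < 0 then 1 else 0)) * v (i - 1)
          + (1 + 2 * β + |α|) * v i
          - (β + |α| * (if 0 < α then 1 else 0)) * v (i + 1)) ∧
      (∀ v, Ainv (A v) = v) ∧ (∀ v, A (Ainv v) = v) ∧ ‖Ainv‖ ≤ 1 ∧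
      (∀ (v : lp (fun _ : ℤ => ℝ) ∞) (i : ℤ),
        B v i = v i + h * Δx * ∑' l : ℤ, ν ((l : ℝ) * Δx) * (v (i + l) - v i)) ∧
      ‖B‖ ≤ 1 + 2 * ((∑' l : ℤ, ν ((l : ℝ) * Δx)) * Δx) * h ∧
      (h * Δx * (∑' l : {l : ℤ // l ≠ 0}, ν (((l : ℤ) : ℝ) * Δx)) ≤ 1 →
        ∀ E : ℤ → lp (fun _ : ℤ => ℝ) ∞,
          (∀ j i : ℤ, E j i = if i = j then (1 : ℝ) else 0) →
          (∀ i j : ℤ, 0 ≤ Ainv (B (E j)) i) ∧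
          ∀ i : ℤ, ∑' j : ℤ, Ainv (B (E j)) i = 1) := by
  set a := β + |α| * (if α < 0 then 1 else 0)
  set b := β + |α| * (if 0 < α then 1 else 0)
  have ha : 0 ≤ a := by positivity
  have hb : 0 ≤ b := by positivity
  have hc : 1 + a + b = 1 + 2 * β + |α| := by linarith [abs_mul_ite_neg_add_abs_mul_ite_pos α]
  have hκ : 0 ≤ h * Δx := by positivity
  refine ⟨tridiag a b, tridiagInv a b, jumpOp (h * Δx) fun l => ν (l * Δx), fun v i => ?_,
    tridiagInv_tridiag ha hb, tridiag_tridiagInv ha hb, norm_tridiagInv_le_one ha hb,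
    jumpOp_apply hsum, (norm_jumpOp_le hκ (fun l => hν _) hsum).trans_eq (by ring),
    fun hmass E hE => ?_⟩
  · rw [tridiag_apply ha hb, hc]
  · obtain rfl : E = unitVec :=
      funext fun j => lp.ext <| funext fun i => by simp [hE, lp.single_apply, Pi.single_apply]
    have hstoch :=
      (hasNonnegRowSums_jumpOp_unitVec hκ (fun l => hν _) hsum hmass).tridiagInv ha hb
    exact ⟨fun i j => (hstoch i).1 j, fun i => (hstoch i).2.tsum_eq⟩
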